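/- arXiv:math/0609524 — 2 statements merged into one kernel-verified Lean document; each statement's English description precedes it below -/
import Mathlib

section
/- Let a, λ₁, λ₂, λ₃, λ₄ be complex numbers with a ≠ 0 and set b = -a·e₁, c = a·e₂, d = -a·e₃, e = a·e₄, where e_i denotes the i-th elementary symmetric polynomial of λ₁,λ₂,λ₃,λ₄. Then some three of the roots λ₁, λ₂, λ₃, λ₄ are all equal to each other if and only if c² - 3bd + 12ae = 0 and some two of the roots are equal to each other. -/
lemma apolara_factor (a p q r : ℂ)
    (h : a ^ 2 * ((p - q) ^ 2 * (p - r) ^ 2) = 0) (ha : a ≠ 0) :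
    p = q ∨ p = r := by
  rcases mul_eq_zero.1 h with h | h
  · exact absurd (pow_eq_zero_iff two_ne_zero |>.1 h) ha
  · rcases mul_eq_zero.1 h with h | h
    · exact Or.inl (sub_eq_zero.1 (pow_eq_zero_iff two_ne_zero |>.1 h))
    · exact Or.inr (sub_eq_zero.1 (pow_eq_zero_iff two_ne_zero |>.1 h))

/-- For a quartic with `a ≠ 0` and roots `λ₁, λ₂, λ₃, λ₄`: some three roots are
    all equal iff the apolara `c² - 3bd + 12ae` vanishes and some two roots are
    equal. -/
theorem quartic_triple_root_iff_apolara_and_double_root (a l1 l2 l3 l4 b c d e : ℂ)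
    (ha : a ≠ 0)
    (hb : b = -a * (l1 + l2 + l3 + l4))
    (hc : c = a * (l1 * l2 + l1 * l3 + l1 * l4 + l2 * l3 + l2 * l4 + l3 * l4))
    (hd : d = -a * (l1 * l2 * l3 + l1 * l2 * l4 + l1 * l3 * l4 + l2 * l3 * l4))
    (he : e = a * (l1 * l2 * l3 * l4)) :
    ((l1 = l2 ∧ l2 = l3) ∨ (l1 = l2 ∧ l2 = l4) ∨ (l1 = l3 ∧ l3 = l4)
        ∨ (l2 = l3 ∧ l3 = l4)) ↔
      (c ^ 2 - 3 * b * d + 12 * a * e = 0 ∧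
        (l1 = l2 ∨ l1 = l3 ∨ l1 = l4 ∨ l2 = l3 ∨ l2 = l4 ∨ l3 = l4)) := by
  subst hb hc hd he
  constructor
  · rintro (⟨h1, h2⟩ | ⟨h1, h2⟩ | ⟨h1, h2⟩ | ⟨h1, h2⟩) <;> subst h1 <;> subst h2 <;>
      refine ⟨by ring, ?_⟩
    · exact Or.inl rfl
    · exact Or.inl rfl
    · exact Or.inr (Or.inl rfl)
    · exact Or.inr (Or.inr (Or.inr (Or.inl rfl)))
  · rintro ⟨hI, h | h | h | h | h | h⟩ <;> subst h
    · have := apolara_factor a l1 l3 l4 (by rw [← hI]; ring) ha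
      rcases this with h | h
      · exact Or.inl ⟨rfl, h⟩
      · exact Or.inr (Or.inl ⟨rfl, h⟩)
    · have := apolara_factor a l1 l2 l4 (by rw [← hI]; ring) ha
      rcases this with h | h
      · exact Or.inl ⟨h, h.symm⟩
      · exact Or.inr (Or.inr (Or.inl ⟨rfl, h⟩))
    · have := apolara_factor a l1 l2 l3 (by rw [← hI]; ring) ha
      rcases this with h | h
      · exact Or.inr (Or.inl ⟨h, h.symm⟩)
      · exact Or.inr (Or.inr (Or.inl ⟨h, h.symm⟩))
    · have := apolara_factor a l2 l1 l4 (by rw [← hI]; ring) ha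
      rcases this with h | h
      · exact Or.inl ⟨h.symm, rfl⟩
      · exact Or.inr (Or.inr (Or.inr ⟨rfl, h⟩))
    · have := apolara_factor a l2 l1 l3 (by rw [← hI]; ring) ha
      rcases this with h | h
      · exact Or.inr (Or.inl ⟨h.symm, rfl⟩)
      · exact Or.inr (Or.inr (Or.inr ⟨h, h.symm⟩))
    · have := apolara_factor a l3 l1 l2 (by rw [← hI]; ring) ha
      rcases this with h | h
      · exact Or.inr (Or.inr (Or.inl ⟨h.symm, rfl⟩))
      · exact Or.inr (Or.inr (Or.inr ⟨h.symm, rfl⟩))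
end

section
/- Let λ₁, λ₂, λ₃, λ₄ be elements of any type (in particular complex numbers). Then there exist three indices i < j < k in {1,2,3,4} with λ_i = λ_j = λ_k if and only if (λ₁ = λ₂ or λ₃ = λ₄) and (λ₁ = λ₃ or λ₂ = λ₄) and (λ₁ = λ₄ or λ₂ = λ₃). -/
/-- For four elements of any type, some three of them coincide iff
    `(λ₁ = λ₂ ∨ λ₃ = λ₄) ∧ (λ₁ = λ₃ ∨ λ₂ = λ₄) ∧ (λ₁ = λ₄ ∨ λ₂ = λ₃)`. -/
theorem three_of_four_coincide_iff {α : Type*} (f : Fin 4 → α) :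
    (∃ i j k : Fin 4, i < j ∧ j < k ∧ f i = f j ∧ f j = f k) ↔
      ((f 0 = f 1 ∨ f 2 = f 3) ∧ (f 0 = f 2 ∨ f 1 = f 3)
        ∧ (f 0 = f 3 ∨ f 1 = f 2)) := by
  constructor
  · rintro ⟨i, j, k, hij, hjk, hfij, hfjk⟩
    fin_cases i <;> fin_cases j <;> fin_cases k <;> simp_all
  -- Pairs taken from two different pairings of the indices share an index, so already the
  -- first two conjuncts chain into three equal values.
  · rintro ⟨h01 | h23, h02 | h13, -⟩
    · exact ⟨0, 1, 2, by decide, by decide, h01, h01.symm.trans h02⟩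
    · exact ⟨0, 1, 3, by decide, by decide, h01, h13⟩
    · exact ⟨0, 2, 3, by decide, by decide, h02, h23⟩
    · exact ⟨1, 2, 3, by decide, by decide, h13.trans h23.symm, h23⟩
end
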